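/- arXiv:1812.07780 — 3 statements merged into one kernel-verified Lean document; each statement's English description precedes it below -/
import Mathlib

section
/- Let I₀, I₁ be complex structures on a finite-dimensional real inner product space. Then every eigenvalue λ ∈ (0,1) of T₀*T₀, where T₀ = (I₀+I₁)/2, has real multiplicity divisible by 4, and the kernel of T₀*T₀ has even real dimension. -/
/-!
On every eigenspace `E` of `S = T₀*T₀` both `I₀` and `I₁` act, because
`S = 1/2 - (I₀I₁ + I₁I₀)/4` and the anticommutator `I₀I₁ + I₁I₀` commutes with `I₀` and `I₁`.
On `E_μ` it is the scalar `2(1 - 2μ)`, which lies in `(-2, 2)` for `μ ∈ (0,1)`; then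
`(I₁ + (1 - 2μ) I₀) / √(1 - (1 - 2μ)²)` is a complex structure anticommuting with `I₀`, so
`E_μ` is a module over the quaternions and has real dimension divisible by `4`. The kernel `E_0`
is a complex vector space via `I₀`, hence has even real dimension.
-/

open Module

theorem Module.finrank_dvd_finrank_of_algHom {F K V : Type*} [Field F] [DivisionRing K]
    [Algebra F K] [AddCommGroup V] [Module F V] (φ : K →ₐ[F] End F V) :
    finrank F K ∣ finrank F V := by
  let _ : Module K V := Module.compHom V φ.toRingHom
  have : IsScalarTower F K V := ⟨fun r k v => by
    change φ (r • k) v = r • φ k v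
    rw [map_smul, LinearMap.smul_apply]⟩
  exact Module.finrank_dvd_finrank_right F K V

section Quaternions

variable {R : Type*} [Ring R] [Algebra ℝ R]

def QuaternionAlgebra.Basis.ofAnticommute {a j : R} (ha : a * a = -1) (hj : j * j = -1)
    (haj : j * a = -(a * j)) : QuaternionAlgebra.Basis R (-1 : ℝ) 0 (-1) where
  i := a
  j := j
  k := a * j
  i_mul_i := by rw [ha]; module
  j_mul_j := by rw [hj]; module
  i_mul_j := rfl
  j_mul_i := by rw [haj]; module

theorem exists_mul_self_eq_neg_one_and_mul_eq_neg_mul {a b : R} {c : ℝ} (hc : c ^ 2 < 1)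
    (ha : a * a = -1) (hb : b * b = -1) (hab : a * b + b * a = (2 * c) • 1) :
    ∃ j : R, j * j = -1 ∧ j * a = -(a * j) := by
  set r := √(1 - c ^ 2)
  have hr : r ^ 2 = 1 - c ^ 2 := Real.sq_sqrt (by linarith)
  have hr0 : r ≠ 0 := (Real.sqrt_pos.2 (by linarith)).ne'
  have hba : b * a = (2 * c) • 1 - a * b := by rw [← hab]; abel
  -- `j = (b + c a) / √(1 - c²)`, the Gram–Schmidt step making `b` orthogonal to `a`
  refine ⟨r⁻¹ • (b + c • a), ?_, ?_⟩
  · have hsq : (b + c • a) * (b + c • a) = (c ^ 2 - 1) • (1 : R) := by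
      rw [add_mul, mul_add, mul_add, hb, mul_smul_comm, hba, smul_mul_assoc, smul_mul_assoc,
        mul_smul_comm, ha]
      module
    have hcoef : r⁻¹ * r⁻¹ * (c ^ 2 - 1) = -1 := by
      field_simp
      linarith
    rw [smul_mul_assoc, mul_smul_comm, hsq, smul_smul, smul_smul, hcoef]
    module
  · rw [mul_smul_comm, smul_mul_assoc, mul_add, add_mul, mul_smul_comm, smul_mul_assoc, ha, hba]
    module

end Quaternions

section RealEndomorphisms

variable {V : Type*} [AddCommGroup V] [Module ℝ V]

theorem Module.End.even_finrank_of_mul_self_eq_neg_one {J : End ℝ V} (hJ : J * J = -1) :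
    Even (finrank ℝ V) := by
  have h := finrank_dvd_finrank_of_algHom (Complex.liftAux J hJ)
  rwa [Complex.finrank_real_complex, ← even_iff_two_dvd] at h

theorem Module.End.four_dvd_finrank_of_mul_add_mul_eq_smul_one {A B : End ℝ V} {c : ℝ}
    (hc : c ^ 2 < 1) (hA : A * A = -1) (hB : B * B = -1)
    (hAB : A * B + B * A = (2 * c) • 1) : 4 ∣ finrank ℝ V := by
  obtain ⟨J, hJ, hJA⟩ := exists_mul_self_eq_neg_one_and_mul_eq_neg_mul hc hA hB hAB
  rw [← Quaternion.finrank_eq_four (R := ℝ)]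
  exact finrank_dvd_finrank_of_algHom (QuaternionAlgebra.Basis.ofAnticommute hA hJ hJA).liftHom

end RealEndomorphisms

section Restriction

variable {R M : Type*} [CommRing R] [AddCommGroup M] [Module R M] {p : Submodule R M}
  {f g : End R M}

theorem LinearMap.restrict_mul_self_eq_neg_one (hf : Set.MapsTo f p p) (h : f * f = -1) :
    f.restrict hf * f.restrict hf = -1 := by
  ext x
  exact congr($h x)

theorem LinearMap.restrict_mul_add_mul_eq_smul_one (hf : Set.MapsTo f p p)
    (hg : Set.MapsTo g p p) {c : R} (h : ∀ x ∈ p, (f * g + g * f) x = c • x) :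
    f.restrict hf * g.restrict hg + g.restrict hg * f.restrict hf = c • 1 := by
  ext x
  exact h x x.2

end Restriction

theorem commute_mul_add_mul_of_commute_mul_self {R : Type*} [Ring R] {a b : R}
    (h : Commute (a * a) b) : Commute a (a * b + b * a) := by
  simp only [Commute, SemiconjBy, mul_add, add_mul, ← mul_assoc, h.eq]
  rw [mul_assoc b a a, add_comm]

theorem LinearMap.adjoint_half_smul_add_mul_self {H : Type*} [NormedAddCommGroup H]
    [InnerProductSpace ℝ H] [FiniteDimensional ℝ H] {I₀ I₁ : H →ₗ[ℝ] H}
    (h₀a : LinearMap.adjoint I₀ = -I₀) (h₀sq : I₀ * I₀ = -1)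
    (h₁a : LinearMap.adjoint I₁ = -I₁) (h₁sq : I₁ * I₁ = -1) :
    LinearMap.adjoint ((2⁻¹ : ℝ) • (I₀ + I₁)) * ((2⁻¹ : ℝ) • (I₀ + I₁)) =
      (2⁻¹ : ℝ) • 1 - (4⁻¹ : ℝ) • (I₀ * I₁ + I₁ * I₀) := by
  rw [map_smulₛₗ, map_add, h₀a, h₁a, smul_mul_smul, add_mul, mul_add, mul_add]
  simp only [neg_mul, h₀sq, h₁sq, RCLike.conj_to_real]
  module

/-- For complex structures `I₀, I₁` on a finite-dimensional real inner
product space and `T₀ = (I₀+I₁)/2`, every eigenvalue `μ ∈ (0,1)` of `T₀*T₀` has real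
multiplicity divisible by `4`, and the kernel of `T₀*T₀` has even real dimension. -/
theorem eigenvalue_multiplicities_of_TstarT
    {H : Type*} [NormedAddCommGroup H] [InnerProductSpace ℝ H] [FiniteDimensional ℝ H]
    (I₀ I₁ : H →ₗ[ℝ] H)
    (h₀a : LinearMap.adjoint I₀ = -I₀) (h₀sq : I₀ * I₀ = -1)
    (h₁a : LinearMap.adjoint I₁ = -I₁) (h₁sq : I₁ * I₁ = -1) :
    let T₀ := (2⁻¹ : ℝ) • (I₀ + I₁)
    (∀ μ ∈ Set.Ioo (0 : ℝ) 1,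
      4 ∣ finrank ℝ (Module.End.eigenspace (LinearMap.adjoint T₀ * T₀) μ)) ∧
    Even (finrank ℝ (LinearMap.ker (LinearMap.adjoint T₀ * T₀))) := by
  intro T₀
  set S := LinearMap.adjoint T₀ * T₀
  set P := I₀ * I₁ + I₁ * I₀
  have hS : S = (2⁻¹ : ℝ) • 1 - (4⁻¹ : ℝ) • P :=
    LinearMap.adjoint_half_smul_add_mul_self h₀a h₀sq h₁a h₁sq
  have hPS (I : H →ₗ[ℝ] H) (hIP : Commute I P) : Commute I S :=
    hS ▸ ((Commute.one_right I).smul_right _).sub_right (hIP.smul_right _)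
  have hI₀P : Commute I₀ P :=
    commute_mul_add_mul_of_commute_mul_self (h₀sq ▸ Commute.neg_one_left I₁)
  have hI₁P : Commute I₁ (I₀ * I₁ + I₁ * I₀) := add_comm (I₁ * I₀) (I₀ * I₁) ▸
    commute_mul_add_mul_of_commute_mul_self (h₁sq ▸ Commute.neg_one_left I₀)
  have hE₀ μ := Module.End.mapsTo_genEigenspace_of_comm (hPS I₀ hI₀P).symm μ 1
  have hE₁ μ := Module.End.mapsTo_genEigenspace_of_comm (hPS I₁ hI₁P).symm μ 1
  refine ⟨fun μ hμ => ?_, ?_⟩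
  · refine Module.End.four_dvd_finrank_of_mul_add_mul_eq_smul_one (c := 1 - 2 * μ)
      (by nlinarith [hμ.1, hμ.2]) (LinearMap.restrict_mul_self_eq_neg_one (hE₀ μ) h₀sq)
      (LinearMap.restrict_mul_self_eq_neg_one (hE₁ μ) h₁sq)
      (LinearMap.restrict_mul_add_mul_eq_smul_one _ _ fun x hx => ?_)
    have hSx : S x = μ • x := Module.End.mem_eigenspace_iff.mp hx
    rw [hS] at hSx
    simp only [LinearMap.sub_apply, LinearMap.smul_apply, Module.End.one_apply] at hSx
    linear_combination (norm := module) (-4 : ℝ) • hSx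
  · rw [← Module.End.eigenspace_zero]
    exact Module.End.even_finrank_of_mul_self_eq_neg_one
      (LinearMap.restrict_mul_self_eq_neg_one (hE₀ 0) h₀sq)
end

section
/- Let I₀, I₁ be complex structures on a real (finite-dimensional or Hilbert) space with (I₀+I₁) having finite-dimensional kernel. Then dim Ker(I₀+I₁) is even, and (1/2)·dim Ker(I₀+I₁) mod 2 equals dim Ker(I₀−I₁ + 2i) mod 2, where the latter kernel is taken in the complexification. -/
open Module TensorProduct

/-!
Put `A = I₀ + I₁` and `B = I₀ - I₁`. From `I₀² = I₁² = -1` we get `B² + 4 = -A²`, and `A` is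
skew-adjoint, so `ker (B² + 4) = ker A² = ker A`. Splitting `ℂ ⊗ H ≅ H × H` into real and
imaginary parts, `B_ℂ + 2i` becomes `(a, b) ↦ (B a - 2 b, B b + 2 a)`, whose kernel is the
graph of `B / 2` over `ker (B² + 4)`. Hence
`dim_ℝ ker A = dim_ℝ ker (B_ℂ + 2i) = 2 dim_ℂ ker (B_ℂ + 2i)`.
-/

namespace Complexification

variable (V : Type*) [AddCommGroup V] [Module ℝ V]

noncomputable def equivProd : ℂ ⊗[ℝ] V ≃ₗ[ℝ] V × V :=
  TensorProduct.congr Complex.equivRealProdLm (LinearEquiv.refl ℝ V) ≪≫ₗ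
    TensorProduct.prodLeft ℝ ℝ ℝ ℝ V ≪≫ₗ
    (TensorProduct.lid ℝ V).prodCongr (TensorProduct.lid ℝ V)

variable {V}

@[simp]
theorem equivProd_tmul (z : ℂ) (x : V) : equivProd V (z ⊗ₜ x) = (z.re • x, z.im • x) := by
  simp [equivProd]

theorem equivProd_baseChange_add_smul_I (B : V →ₗ[ℝ] V) (c : ℝ) (v : ℂ ⊗[ℝ] V) :
    equivProd V ((B.baseChange ℂ + ((c : ℂ) * Complex.I) • LinearMap.id :
        ℂ ⊗[ℝ] V →ₗ[ℂ] ℂ ⊗[ℝ] V) v) =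
      (B (equivProd V v).1 - c • (equivProd V v).2,
        B (equivProd V v).2 + c • (equivProd V v).1) := by
  induction v using TensorProduct.induction_on with
  | zero => simp [Prod.zero_eq_mk]
  | tmul z x =>
    rw [LinearMap.add_apply, LinearMap.baseChange_tmul, LinearMap.smul_apply, LinearMap.id_apply,
      smul_tmul', map_add, equivProd_tmul, equivProd_tmul, equivProd_tmul]
    ext <;> simp <;> module
  | add v w hv hw =>
    simp only [map_add, hv, hw, Prod.fst_add, Prod.snd_add, Prod.mk_add_mk]
    congr 1 <;> module

theorem map_ker_baseChange_add_smul_I (B : V →ₗ[ℝ] V) {c : ℝ} (hc : c ≠ 0) :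
    ((LinearMap.ker (B.baseChange ℂ + ((c : ℂ) * Complex.I) • LinearMap.id :
        ℂ ⊗[ℝ] V →ₗ[ℂ] ℂ ⊗[ℝ] V)).restrictScalars ℝ).map (equivProd V).toLinearMap =
      (LinearMap.ker (B * B + c ^ 2 • 1)).map (LinearMap.id.prod (c⁻¹ • B)) := by
  ext ⟨a, b⟩
  rw [Submodule.mem_map_equiv, Submodule.restrictScalars_mem, LinearMap.mem_ker,
    ← (equivProd V).map_eq_zero_iff, equivProd_baseChange_add_smul_I,
    LinearEquiv.apply_symm_apply]
  simp only [Prod.mk_eq_zero, Submodule.mem_map, LinearMap.mem_ker, LinearMap.prod_apply,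
    Function.prod_apply, LinearMap.id_apply, Prod.mk.injEq, LinearMap.add_apply,
    Module.End.mul_apply, LinearMap.smul_apply, Module.End.one_apply]
  constructor
  · rintro ⟨hBa, hBb⟩
    have hb : b = c⁻¹ • B a := by
      rw [sub_eq_zero.mp hBa, smul_smul, inv_mul_cancel₀ hc, one_smul]
    refine ⟨a, ?_, rfl, hb.symm⟩
    rw [sub_eq_zero.mp hBa, map_smul, eq_neg_of_add_eq_zero_left hBb]
    module
  · rintro ⟨x, hx, rfl, rfl⟩
    constructor
    · rw [smul_smul, mul_inv_cancel₀ hc, one_smul, sub_self]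
    · rw [map_smul, eq_neg_of_add_eq_zero_left hx]
      match_scalars
      field_simp
      ring

theorem finrank_ker_baseChange_add_smul_I (B : V →ₗ[ℝ] V) {c : ℝ} (hc : c ≠ 0) :
    finrank ℝ (LinearMap.ker (B * B + c ^ 2 • 1)) =
      2 * finrank ℂ (LinearMap.ker (B.baseChange ℂ + ((c : ℂ) * Complex.I) • LinearMap.id :
        ℂ ⊗[ℝ] V →ₗ[ℂ] ℂ ⊗[ℝ] V)) := by
  set K := LinearMap.ker (B.baseChange ℂ + ((c : ℂ) * Complex.I) • LinearMap.id :
    ℂ ⊗[ℝ] V →ₗ[ℂ] ℂ ⊗[ℝ] V)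
  have graph_injective : Function.Injective (LinearMap.id.prod (c⁻¹ • B)) :=
    fun x y h ↦ congrArg Prod.fst h
  calc finrank ℝ (LinearMap.ker (B * B + c ^ 2 • 1))
      = finrank ℝ ((LinearMap.ker (B * B + c ^ 2 • 1)).map (LinearMap.id.prod (c⁻¹ • B))) :=
        (Submodule.equivMapOfInjective _ graph_injective _).finrank_eq
    _ = finrank ℝ ((K.restrictScalars ℝ).map (equivProd V).toLinearMap) := by
        rw [map_ker_baseChange_add_smul_I B hc]
    _ = finrank ℝ K := by
        rw [LinearEquiv.finrank_map_eq]; rfl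
    _ = 2 * finrank ℂ K := by
        rw [← Module.finrank_mul_finrank ℝ ℂ K, Complex.finrank_real_complex]

end Complexification

theorem LinearMap.ker_mul_self_of_adjoint_eq_neg {E : Type*} [NormedAddCommGroup E]
    [InnerProductSpace ℝ E] [FiniteDimensional ℝ E] {A : E →ₗ[ℝ] E}
    (hA : LinearMap.adjoint A = -A) :
    LinearMap.ker (A * A) = LinearMap.ker A := by
  rw [← A.ker_adjoint_comp_self, hA, LinearMap.neg_comp, LinearMap.ker_neg,
    Module.End.mul_eq_comp]

theorem sub_mul_self_add_four_eq_neg_add_mul_self {R : Type*} [Ring R] [Algebra ℝ R]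
    {a b : R} (ha : a * a = -1) (hb : b * b = -1) :
    (a - b) * (a - b) + (2 : ℝ) ^ 2 • 1 = -((a + b) * (a + b)) := by
  have parallelogram :
      (a - b) * (a - b) + (a + b) * (a + b) = 2 * (a * a) + 2 * (b * b) := by
    noncomm_ring
  rw [Algebra.smul_def, mul_one, map_pow, map_ofNat, eq_neg_iff_add_eq_zero, add_right_comm,
    parallelogram, ha, hb]
  norm_num

/-- For complex structures `I₀, I₁` (here on a finite-dimensional real
inner product space, so that `Ker(I₀+I₁)` is finite dimensional), `dim Ker(I₀+I₁)` is
even and `(1/2)·dim Ker(I₀+I₁) mod 2` equals `dim Ker(I₀−I₁+2i) mod 2`, the latter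
kernel being taken in the complexification `ℂ ⊗ℝ H`. -/
theorem Z2_index_two_formulas
    {H : Type*} [NormedAddCommGroup H] [InnerProductSpace ℝ H] [FiniteDimensional ℝ H]
    (I₀ I₁ : H →ₗ[ℝ] H)
    (h₀a : LinearMap.adjoint I₀ = -I₀) (h₀sq : I₀ * I₀ = -1)
    (h₁a : LinearMap.adjoint I₁ = -I₁) (h₁sq : I₁ * I₁ = -1) :
    Even (finrank ℝ (LinearMap.ker (I₀ + I₁))) ∧
    (finrank ℝ (LinearMap.ker (I₀ + I₁)) / 2) % 2 =
      finrank ℂ (LinearMap.ker ((I₀ - I₁).baseChange ℂ +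
        (2 * Complex.I) • (LinearMap.id : ℂ ⊗[ℝ] H →ₗ[ℂ] ℂ ⊗[ℝ] H))) % 2 := by
  have skew : LinearMap.adjoint (I₀ + I₁) = -(I₀ + I₁) := by
    rw [map_add, h₀a, h₁a, neg_add]
  have ker_eq :
      LinearMap.ker ((I₀ - I₁) * (I₀ - I₁) + (2 : ℝ) ^ 2 • 1) = LinearMap.ker (I₀ + I₁) := by
    rw [sub_mul_self_add_four_eq_neg_add_mul_self h₀sq h₁sq, LinearMap.ker_neg,
      LinearMap.ker_mul_self_of_adjoint_eq_neg skew]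
  have dim_eq := Complexification.finrank_ker_baseChange_add_smul_I (I₀ - I₁) two_ne_zero
  rw [ker_eq] at dim_eq
  push_cast at dim_eq
  rw [dim_eq]
  exact ⟨even_two_mul _, by omega⟩
end

section
/- Let p be a rank-one orthogonal projection on a complex Hilbert space H, I = [[0,1],[−1,0]] on H ⊕ H, O = [[1−2p,0],[0,1]], and P = (1/2)[[1, −i],[i, 1]]. Then P² = P = P*, PIP = iP on Ran(P), and POP + (1−P) = 1 − (1/2)[[p, −ip],[ip, p]], whose kernel has complex dimension 1. -/
open Matrix Module

variable {H : Type*} [NormedAddCommGroup H] [InnerProductSpace ℂ H] [CompleteSpace H]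

set_option maxHeartbeats 1000000

/-- The bounded operator on `H ⊕ H` associated to a 2×2 matrix of bounded operators
on `H`. -/
noncomputable def blockOp (M : Matrix (Fin 2) (Fin 2) (H →L[ℂ] H)) :
    (H × H) →L[ℂ] (H × H) :=
  ((M 0 0).comp (ContinuousLinearMap.fst ℂ H H) +
      (M 0 1).comp (ContinuousLinearMap.snd ℂ H H)).prod
    ((M 1 0).comp (ContinuousLinearMap.fst ℂ H H) +
      (M 1 1).comp (ContinuousLinearMap.snd ℂ H H))

private lemma ker_aux (p : H →L[ℂ] H) (hp : p * p = p)
    (hrank : finrank ℂ (LinearMap.range (p : H →ₗ[ℂ] H)) = 1) :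
    finrank ℂ (LinearMap.ker ((blockOp
      (1 - (2⁻¹ : ℂ) • !![p, (-Complex.I) • p; Complex.I • p, p])) : (H × H) →ₗ[ℂ] (H × H))) = 1 := by
  obtain ⟨v₀, hv₀, hspan⟩ := finrank_eq_one_iff'.mp hrank
  set v : H := (v₀ : H) with hvdef
  have hvne : v ≠ 0 := fun h => hv₀ (Subtype.ext h)
  have hfix : ∀ w : H, w ∈ LinearMap.range (p : H →ₗ[ℂ] H) → p w = w := by
    rintro w ⟨u, rfl⟩
    have := congrFun (congrArg DFunLike.coe hp) u
    simpa [ContinuousLinearMap.mul_apply] using this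
  have hpv : p v = v := hfix v v₀.2
  have hker : LinearMap.ker ((blockOp
      (1 - (2⁻¹ : ℂ) • !![p, (-Complex.I) • p; Complex.I • p, p])) : (H × H) →ₗ[ℂ] (H × H))
      = Submodule.span ℂ {(((-Complex.I) • v, v) : H × H)} := by
    ext z
    obtain ⟨x, y⟩ := z
    simp only [LinearMap.mem_ker, Submodule.mem_span_singleton]
    constructor
    · intro hz
      have h1 : x - (2⁻¹ : ℂ) • p x - (2⁻¹ : ℂ) • ((-Complex.I) • p y) = 0 := by
        have := congrArg Prod.fst hz
        simpa [blockOp, Matrix.sub_apply, Matrix.smul_apply, Matrix.one_apply,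
          sub_eq_add_neg, add_assoc] using this
      have h2 : y - (2⁻¹ : ℂ) • (Complex.I • p x) - (2⁻¹ : ℂ) • p y = 0 := by
        have := congrArg Prod.snd hz
        have h := this
        simp only [blockOp, ContinuousLinearMap.prod_apply, ContinuousLinearMap.add_apply,
          ContinuousLinearMap.comp_apply, ContinuousLinearMap.coe_fst',
          ContinuousLinearMap.coe_snd', Matrix.sub_apply, Matrix.smul_apply,
          Matrix.one_apply, Prod.snd_zero] at h
        norm_num at h
        try simp only [ContinuousLinearMap.sub_apply, ContinuousLinearMap.smul_apply,
          ContinuousLinearMap.one_apply, ContinuousLinearMap.zero_apply,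
          ContinuousLinearMap.neg_apply] at h
        linear_combination (norm := module) h
      have h1' : x - (2⁻¹ : ℂ) • p x - (2⁻¹ : ℂ) • ((-Complex.I) • p y) = 0 := h1
      have hxmem : x ∈ LinearMap.range (p : H →ₗ[ℂ] H) := by
        refine ⟨(2⁻¹ : ℂ) • x + ((2⁻¹ : ℂ) * (-Complex.I)) • y, ?_⟩
        have hx : x = p ((2⁻¹ : ℂ) • x + ((2⁻¹ : ℂ) * (-Complex.I)) • y) → True := fun _ => trivial
        have : p ((2⁻¹ : ℂ) • x + ((2⁻¹ : ℂ) * (-Complex.I)) • y)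
            = (2⁻¹ : ℂ) • p x + (2⁻¹ : ℂ) • ((-Complex.I) • p y) := by
          simp [map_add, _root_.map_smul, smul_smul]
        rw [ContinuousLinearMap.coe_coe, this]
        linear_combination (norm := module) -h1
      have hymem : y ∈ LinearMap.range (p : H →ₗ[ℂ] H) := by
        refine ⟨((2⁻¹ : ℂ) * Complex.I) • x + (2⁻¹ : ℂ) • y, ?_⟩
        have : p (((2⁻¹ : ℂ) * Complex.I) • x + (2⁻¹ : ℂ) • y)
            = (2⁻¹ : ℂ) • (Complex.I • p x) + (2⁻¹ : ℂ) • p y := by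
          simp [map_add, _root_.map_smul, smul_smul]
        rw [ContinuousLinearMap.coe_coe, this]
        linear_combination (norm := module) -h2
      have hpx : p x = x := hfix x hxmem
      have hpy : p y = y := hfix y hymem
      rw [hpx, hpy] at h1
      have hxy : x = (-Complex.I) • y := by
        linear_combination (norm := module) (2 : ℂ) • h1
      obtain ⟨b, hb⟩ : ∃ b : ℂ, b • v = y := by
        obtain ⟨c, hc⟩ := hspan ⟨y, hymem⟩
        exact ⟨c, congrArg Subtype.val hc⟩
      refine ⟨b, ?_⟩
      apply Prod.ext
      · show b • ((-Complex.I) • v) = x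
        rw [hxy, ← hb, smul_comm]
      · simpa using hb
    · rintro ⟨c, hc⟩
      rw [← hc, _root_.map_smul]
      have hcomp : blockOp (1 - (2⁻¹ : ℂ) • !![p, (-Complex.I) • p; Complex.I • p, p])
          (((-Complex.I) • v, v) : H × H) = 0 := by
        apply Prod.ext <;>
          simp only [blockOp, ContinuousLinearMap.prod_apply, ContinuousLinearMap.add_apply,
            ContinuousLinearMap.comp_apply, ContinuousLinearMap.coe_fst',
            ContinuousLinearMap.coe_snd', Matrix.sub_apply, Matrix.smul_apply,
            Matrix.one_apply, Prod.fst_zero, Prod.snd_zero] <;>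
          norm_num <;>
          simp only [ContinuousLinearMap.sub_apply, ContinuousLinearMap.smul_apply,
            ContinuousLinearMap.one_apply, ContinuousLinearMap.neg_apply,
            ContinuousLinearMap.zero_apply, _root_.map_smul, hpv] <;>
          match_scalars <;> (ring_nf; try simp only [Complex.I_sq]; try norm_num)
      rw [ContinuousLinearMap.coe_coe, hcomp, smul_zero]
  rw [hker]
  refine finrank_span_singleton ?_
  simp [Prod.ext_iff, hvne]

/-- For a rank-one orthogonal projection `p` on a complex Hilbert space,
`I = [[0,1],[−1,0]]`, `O = [[1−2p,0],[0,1]]` and `P = ½[[1,−i],[i,1]]`, the operator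
`P` is an orthogonal projection, `PIP = iP`, and
`POP + (1−P) = 1 − ½[[p,−ip],[ip,p]]`, whose kernel has complex dimension `1`. -/
theorem toeplitz_like_index_example
    (p : H →L[ℂ] H) (hp : p * p = p) (hps : star p = p)
    (hrank : finrank ℂ (LinearMap.range (p : H →ₗ[ℂ] H)) = 1) :
    let I : Matrix (Fin 2) (Fin 2) (H →L[ℂ] H) := !![0, 1; -1, 0]
    let O : Matrix (Fin 2) (Fin 2) (H →L[ℂ] H) := !![1 - (2 : ℂ) • p, 0; 0, 1]
    let P : Matrix (Fin 2) (Fin 2) (H →L[ℂ] H) :=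
      (2⁻¹ : ℂ) • !![1, (-Complex.I) • 1; Complex.I • 1, 1]
    P * P = P ∧ Pᴴ = P ∧ P * I * P = Complex.I • P ∧
    P * O * P + (1 - P) =
      1 - (2⁻¹ : ℂ) • !![p, (-Complex.I) • p; Complex.I • p, p] ∧
    finrank ℂ (LinearMap.ker ((blockOp (P * O * P + (1 - P)) : (H × H) →ₗ[ℂ] (H × H)))) = 1 := by
  intro I O P
  have h1 : P * P = P := by
    simp only [P, Matrix.smul_mul, Matrix.mul_smul, Matrix.mul_fin_two, smul_smul]
    ext i j
    fin_cases i <;> fin_cases j <;>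
      simp [Matrix.smul_apply, smul_smul, mul_smul_comm, smul_mul_assoc,
        Complex.I_mul_I] <;> module
  have h2 : Pᴴ = P := by
    simp only [P, Matrix.conjTranspose_smul]
    ext i j
    fin_cases i <;> fin_cases j <;>
      simp [Matrix.conjTranspose_apply, star_smul, Complex.star_def, Complex.conj_I]
  have h3 : P * I * P = Complex.I • P := by
    simp only [P, I, Matrix.smul_mul, Matrix.mul_smul, Matrix.mul_fin_two, smul_smul]
    ext i j
    fin_cases i <;> fin_cases j <;>
      simp [Matrix.smul_apply, smul_smul, mul_smul_comm, smul_mul_assoc] <;>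
      match_scalars <;> (ring_nf; try simp only [Complex.I_sq]; try norm_num)
  have h4 : P * O * P + (1 - P) =
      1 - (2⁻¹ : ℂ) • !![p, (-Complex.I) • p; Complex.I • p, p] := by
    simp only [P, O, Matrix.smul_mul, Matrix.mul_smul, Matrix.mul_fin_two]
    ext i j x
    fin_cases i <;> fin_cases j <;>
      simp only [Matrix.smul_apply, Matrix.add_apply, Matrix.sub_apply, Matrix.one_apply,
        Matrix.cons_val', Matrix.cons_val_zero, Matrix.cons_val_one, Matrix.head_cons,
        Matrix.head_fin_const, Matrix.empty_val', Matrix.cons_val_fin_one] <;>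
      norm_num <;>
      match_scalars <;> (ring_nf; try simp only [Complex.I_sq]; try norm_num)
  exact ⟨h1, h2, h3, h4, by rw [h4]; exact ker_aux p hp hrank⟩
end
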